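/- Hopf law: PLUS^{2→1} ∘ (NEG ⊗ I) ∘ COPY^{1→2} = |0⟩⟨+|, where COPY^{1→2}|k⟩ = |kk⟩, NEG|k⟩ = |−k⟩, PLUS^{2→1} = (1/√d) Σ_{a,b,c : a+b+c=0} |a⟩⟨bc|, and |+⟩ = (1/√d) Σ_k |k⟩. -/

import Mathlib

/-! COPY and NEG ⊗ I are column selections of identity matrices, so their composite sends `|k⟩`
to the basis vector `|-k, k⟩`, and PLUS applied to it is `1/√d` exactly when `a - k + k = 0`,
i.e. when `a = 0`. -/

open Matrix Kronecker

def COPY12 (d : ℕ) : Matrix (ZMod d × ZMod d) (ZMod d) ℂ :=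
  fun p k => if p.1 = k ∧ p.2 = k then 1 else 0

def NEGgate (d : ℕ) : Matrix (ZMod d) (ZMod d) ℂ :=
  fun a b => if a = -b then 1 else 0

noncomputable def PLUS21 (d : ℕ) : Matrix (ZMod d) (ZMod d × ZMod d) ℂ :=
  fun a p => if a + p.1 + p.2 = 0 then 1 / (Real.sqrt d : ℂ) else 0

theorem Matrix.mul_one_submatrix_id {l m o α : Type*} [Fintype o] [DecidableEq o]
    [NonAssocSemiring α] (M : Matrix m o α) (e : l → o) :
    M * (1 : Matrix o o α).submatrix id e = M.submatrix id e :=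
  mul_submatrix_one (Equiv.refl o) e M

section

variable {d : ℕ}

theorem COPY12_eq_submatrix_one :
    COPY12 d =
      (1 : Matrix (ZMod d × ZMod d) (ZMod d × ZMod d) ℂ).submatrix id fun k => (k, k) := by
  ext p k
  simp [COPY12, one_apply, Prod.ext_iff]

theorem NEGgate_eq_submatrix_one :
    NEGgate d = (1 : Matrix (ZMod d) (ZMod d) ℂ).submatrix id Neg.neg := by
  ext a b
  simp [NEGgate, one_apply]

theorem PLUS21_submatrix_neg_diag :
    (PLUS21 d).submatrix id (fun k => (-k, k)) =
      fun a _ => if a = 0 then 1 / (Real.sqrt d : ℂ) else 0 := by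
  ext a k
  simp [PLUS21]

end

theorem hopf_law (d : ℕ) [NeZero d] :
    PLUS21 d * (NEGgate d ⊗ₖ (1 : Matrix (ZMod d) (ZMod d) ℂ)) * COPY12 d =
      fun a k => if a = 0 then 1 / (Real.sqrt d : ℂ) else 0 := by
  rw [NEGgate_eq_submatrix_one, kroneckerMap_submatrix_left, one_kronecker_one,
    COPY12_eq_submatrix_one, Prod.map_id, Matrix.mul_assoc, mul_one_submatrix_id,
    submatrix_submatrix, Function.comp_id, mul_one_submatrix_id]
  exact PLUS21_submatrix_neg_diag
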